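/- arXiv:1909.12628 — 6 statements merged into one kernel-verified Lean document; each statement's English description precedes it below -/
import Mathlib

section
/- Every end ω of an infinite graph G induces a tangle of the set S of all finite-order separations of G: the orientation τ_ω = {(A,B) : every ray of ω has a tail in B} contains exactly one orientation of each finite-order separation, and there are no three separations (A₁,B₁),(A₂,B₂),(A₃,B₃) in τ_ω with G[A₁] ∪ G[A₂] ∪ G[A₃] = G. -/
open Set

universe u

/-- A separation of a graph `G`: a pair of vertex sets covering `V` with no
edge between `A \ B` and `B \ A`. -/
structure Separation {V : Type u} (G : SimpleGraph V) where
  A : Set V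
  B : Set V
  union_eq : A ∪ B = Set.univ
  no_edge : ∀ a ∈ A \ B, ∀ b ∈ B \ A, ¬ G.Adj a b

/-- The oriented separations of finite order. -/
abbrev FinSep {V : Type u} (G : SimpleGraph V) := {s : Separation G // (s.A ∩ s.B).Finite}

/-- The separation topology: basic open sets prescribe the restriction of a
separation to a finite vertex set `Z`. -/
instance sepTop {V : Type u} (G : SimpleGraph V) : TopologicalSpace (FinSep G) :=
  TopologicalSpace.generateFrom
    {O | ∃ Z AZ BZ : Set V, Z.Finite ∧
      O = {s : FinSep G | s.1.A ∩ Z = AZ ∧ s.1.B ∩ Z = BZ}}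

/-- The reverse orientation of a finite-order separation. -/
def FinSep.rev {V : Type u} {G : SimpleGraph V} (s : FinSep G) : FinSep G :=
  ⟨⟨s.1.B, s.1.A, by rw [Set.union_comm]; exact s.1.union_eq,
    fun a ha b hb h => s.1.no_edge b hb a ha h.symm⟩,
   by rw [Set.inter_comm]; exact s.2⟩

/-- A ray in a graph: an injective sequence of successively adjacent vertices. -/
structure GraphRay {V : Type u} (G : SimpleGraph V) where
  f : ℕ → V
  inj : Function.Injective f
  adj : ∀ n, G.Adj (f n) (f (n + 1))

/-- Two rays are equivalent if no finite vertex set separates them. -/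
def RayEquiv {V : Type u} (G : SimpleGraph V) (R R' : GraphRay G) : Prop :=
  ∀ F : Set V, F.Finite →
    ∃ (m n : ℕ) (w : G.Walk (R.f m) (R'.f n)), ∀ x ∈ w.support, x ∉ F

/-- An end of a graph: a (nonempty) equivalence class of rays. -/
structure GraphEnd {V : Type u} (G : SimpleGraph V) where
  rays : Set (GraphRay G)
  nonempty : rays.Nonempty
  mem_iff : ∀ R ∈ rays, ∀ R', R' ∈ rays ↔ RayEquiv G R R'

/-- A ray has a tail in `B`. -/
def HasTailIn {V : Type u} {G : SimpleGraph V} (R : GraphRay G) (B : Set V) : Prop :=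
  ∃ N, ∀ n ≥ N, R.f n ∈ B

/-- The end tangle induced by the end `ω`: all finite-order separations `(A,B)`
such that every ray of `ω` has a tail in `B`. -/
def endTangle {V : Type u} {G : SimpleGraph V} (ω : GraphEnd G) : Set (FinSep G) :=
  {s | ∀ R ∈ ω.rays, HasTailIn R s.1.B}

/-- `v` dominates the end `ω`: `v` sends infinitely many paths to a ray of `ω`
which pairwise meet only in `v`. -/
def Dominates {V : Type u} (G : SimpleGraph V) (v : V) (ω : GraphEnd G) : Prop :=
  ∃ R ∈ ω.rays, ∃ p : ℕ → (n : ℕ) × G.Walk v (R.f n),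
    (∀ i, (p i).2.IsPath) ∧ (Function.Injective fun i => (p i).1) ∧
    ∀ i j, i ≠ j → ∀ x, x ∈ (p i).2.support → x ∈ (p j).2.support → x = v

/-- The end `ω` has (vertex) degree at least `m`: there are `m` pairwise
disjoint rays belonging to `ω`. -/
def DegGE {V : Type u} (G : SimpleGraph V) (ω : GraphEnd G) (m : ℕ) : Prop :=
  ∃ R : Fin m → GraphRay G, (∀ i, R i ∈ ω.rays) ∧
    ∀ i j, i ≠ j → Disjoint (Set.range (R i).f) (Set.range (R j).f)

/-- At least `n` vertices dominate `ω`. -/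
def DomGE {V : Type u} (G : SimpleGraph V) (ω : GraphEnd G) (n : ℕ) : Prop :=
  ∃ D : Finset V, D.card = n ∧ ∀ v ∈ D, Dominates G v ω

/-- `deg(ω) + dom(ω) ≥ k`. -/
def DegDomGE {V : Type u} (G : SimpleGraph V) (ω : GraphEnd G) (k : ℕ) : Prop :=
  ∃ m n, m + n = k ∧ DegGE G ω m ∧ DomGE G ω n

/-- `T` separates `X` from the end `ω`: every ray of `ω` meeting `X` meets `T`. -/
def SeparatesFromEnd {V : Type u} (G : SimpleGraph V) (X T : Set V) (ω : GraphEnd G) : Prop :=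
  ∀ R ∈ ω.rays, (∃ n, R.f n ∈ X) → ∃ n, R.f n ∈ T

/-- `K` is `(<ℵ₀)`-inseparable (apart from the infiniteness requirement): no
finite-order separation separates two of its vertices. -/
def FinInseparable {V : Type u} (G : SimpleGraph V) (K : Set V) : Prop :=
  ∀ s : FinSep G, ∀ x ∈ K, ∀ y ∈ K, ¬(x ∈ s.1.A \ s.1.B ∧ y ∈ s.1.B \ s.1.A)

/-- An `ℵ₀`-block: a maximal infinite set of vertices no two of which can be
separated by a finite-order separation. -/
def Aleph0Block {V : Type u} (G : SimpleGraph V) (K : Set V) : Prop :=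
  K.Infinite ∧ FinInseparable G K ∧
    ∀ K' : Set V, K ⊆ K' → K'.Infinite → FinInseparable G K' → K' = K


section Aux

variable {V : Type u} {G : SimpleGraph V}

lemma ray_eventually_off (s : FinSep G) (R : GraphRay G) :
    ∃ N, ∀ n ≥ N, R.f n ∉ s.1.A ∩ s.1.B := by
  have hfin : {n | R.f n ∈ s.1.A ∩ s.1.B}.Finite :=
    Set.Finite.preimage (Set.injOn_of_injective R.inj) s.2
  obtain ⟨N, hN⟩ := hfin.bddAbove
  exact ⟨N + 1, fun n hn hmem => absurd (hN hmem) (by omega)⟩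

lemma mem_side (s : FinSep G) {x : V} (hx : x ∉ s.1.A ∩ s.1.B) :
    x ∈ s.1.A \ s.1.B ∨ x ∈ s.1.B \ s.1.A := by
  have hx' : x ∈ s.1.A ∪ s.1.B := by rw [s.1.union_eq]; trivial
  rcases hx' with h | h
  · exact Or.inl ⟨h, fun hb => hx ⟨h, hb⟩⟩
  · exact Or.inr ⟨h, fun ha => hx ⟨ha, h⟩⟩

lemma ray_side (s : FinSep G) (R : GraphRay G) :
    (∃ N, ∀ n ≥ N, R.f n ∈ s.1.A \ s.1.B) ∨
    (∃ N, ∀ n ≥ N, R.f n ∈ s.1.B \ s.1.A) := by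
  obtain ⟨N, hN⟩ := ray_eventually_off s R
  have step : ∀ n ≥ N, R.f n ∈ s.1.A \ s.1.B → R.f (n + 1) ∈ s.1.A \ s.1.B := by
    intro n hn hA
    rcases mem_side s (hN (n + 1) (by omega)) with h | h
    · exact h
    · exact absurd (R.adj n) (s.1.no_edge _ hA _ h)
  have stepB : ∀ n ≥ N, R.f n ∈ s.1.B \ s.1.A → R.f (n + 1) ∈ s.1.B \ s.1.A := by
    intro n hn hB
    rcases mem_side s (hN (n + 1) (by omega)) with h | h
    · exact absurd (R.adj n).symm (s.1.no_edge _ h _ hB)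
    · exact h
  rcases mem_side s (hN N le_rfl) with h | h
  · left; exact ⟨N, fun n hn => by
      induction n with
      | zero => simpa [Nat.le_zero.mp hn] using h
      | succ k ih =>
        rcases Nat.lt_or_ge N (k + 1) with hk | hk
        · exact step k (by omega) (ih (by omega))
        · have : N = k + 1 := le_antisymm hn hk
          rwa [← this]⟩
  · right; exact ⟨N, fun n hn => by
      induction n with
      | zero => simpa [Nat.le_zero.mp hn] using h
      | succ k ih =>
        rcases Nat.lt_or_ge N (k + 1) with hk | hk
        · exact stepB k (by omega) (ih (by omega))
        · have : N = k + 1 := le_antisymm hn hk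
          rwa [← this]⟩

lemma walk_side (s : FinSep G) {x y : V} (w : G.Walk x y)
    (hsup : ∀ v ∈ w.support, v ∉ s.1.A ∩ s.1.B) (hx : x ∈ s.1.A) : y ∈ s.1.A := by
  induction w with
  | nil => exact hx
  | @cons a b c hadj p ih =>
    have hb : b ∈ s.1.A := by
      rcases mem_side s (hsup b (by simp)) with h | h
      · exact h.1
      · have ha : a ∈ s.1.A \ s.1.B :=
          ⟨hx, fun hB => hsup a (by simp) ⟨hx, hB⟩⟩
        exact absurd hadj (s.1.no_edge _ ha _ h)
    exact ih (fun v hv => hsup v (by simp [hv])) hb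

lemma equiv_side {R R' : GraphRay G} (h : RayEquiv G R R') (s : FinSep G)
    {N N' : ℕ} (hR : ∀ n ≥ N, R.f n ∈ s.1.A \ s.1.B)
    (hR' : ∀ n ≥ N', R'.f n ∈ s.1.B \ s.1.A) : False := by
  set F : Set V := (s.1.A ∩ s.1.B) ∪ (R.f '' Set.Iio N) ∪ (R'.f '' Set.Iio N') with hF
  have hFfin : F.Finite :=
    ((s.2.union ((Set.finite_Iio N).image R.f)).union ((Set.finite_Iio N').image R'.f))
  obtain ⟨m, n, w, hw⟩ := h F hFfin
  have hm : m ≥ N := by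
    by_contra hm
    exact hw (R.f m) w.start_mem_support
      (Or.inl (Or.inr ⟨m, Set.mem_Iio.mpr (by omega), rfl⟩))
  have hn : n ≥ N' := by
    by_contra hn
    exact hw (R'.f n) w.end_mem_support (Or.inr ⟨n, Set.mem_Iio.mpr (by omega), rfl⟩)
  have : R'.f n ∈ s.1.A :=
    walk_side s w (fun v hv hv' => hw v hv (Or.inl (Or.inl hv'))) (hR m hm).1
  exact (hR' n hn).2 this

lemma tail_in_B (ω : GraphEnd G) {R₀ : GraphRay G} (hR₀ : R₀ ∈ ω.rays) (s : FinSep G)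
    {N : ℕ} (hN : ∀ n ≥ N, R₀.f n ∈ s.1.B \ s.1.A) : s ∈ endTangle ω := by
  intro R hR
  rcases ray_side s R with ⟨M, hM⟩ | ⟨M, hM⟩
  · exact absurd (equiv_side ((ω.mem_iff R hR R₀).mp hR₀) s hM hN) (fun h => h)
  · exact ⟨M, fun n hn => (hM n hn).1⟩

end Aux

/-- Every end of an infinite graph induces a tangle of the set of
all finite-order separations. -/
theorem end_induces_tangle {V : Type u} [Infinite V] (G : SimpleGraph V) (ω : GraphEnd G) :
    (∀ s : FinSep G,
      (s ∈ endTangle ω ∨ s.rev ∈ endTangle ω) ∧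
        ¬(s ∈ endTangle ω ∧ s.rev ∈ endTangle ω)) ∧
    ¬ ∃ s₁ ∈ endTangle ω, ∃ s₂ ∈ endTangle ω, ∃ s₃ ∈ endTangle ω,
        s₁.1.A ∪ s₂.1.A ∪ s₃.1.A = Set.univ ∧
        ∀ u v : V, G.Adj u v →
          (u ∈ s₁.1.A ∧ v ∈ s₁.1.A) ∨ (u ∈ s₂.1.A ∧ v ∈ s₂.1.A) ∨
            (u ∈ s₃.1.A ∧ v ∈ s₃.1.A) := by
  obtain ⟨R₀, hR₀⟩ := ω.nonempty
  constructor
  · intro s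
    constructor
    · rcases ray_side s R₀ with ⟨N, hN⟩ | ⟨N, hN⟩
      · right
        exact tail_in_B ω hR₀ s.rev (N := N) hN
      · left
        exact tail_in_B ω hR₀ s hN
    · rintro ⟨h1, h2⟩
      obtain ⟨N₁, hN₁⟩ := h1 R₀ hR₀
      obtain ⟨N₂, hN₂⟩ := h2 R₀ hR₀
      obtain ⟨N, hN⟩ := ray_eventually_off s R₀
      have := hN (N + N₁ + N₂) (by omega)
      exact this ⟨hN₂ _ (by omega), hN₁ _ (by omega)⟩
  · rintro ⟨s₁, h₁, s₂, h₂, s₃, h₃, hcov, -⟩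
    have key : ∀ s : FinSep G, s ∈ endTangle ω → ∃ N, ∀ n ≥ N, R₀.f n ∉ s.1.A := by
      intro s hs
      obtain ⟨N₁, hN₁⟩ := hs R₀ hR₀
      obtain ⟨N₂, hN₂⟩ := ray_eventually_off s R₀
      exact ⟨N₁ + N₂, fun n hn hA => hN₂ n (by omega) ⟨hA, hN₁ n (by omega)⟩⟩
    obtain ⟨M₁, hM₁⟩ := key s₁ h₁
    obtain ⟨M₂, hM₂⟩ := key s₂ h₂
    obtain ⟨M₃, hM₃⟩ := key s₃ h₃
    have hx : R₀.f (M₁ + M₂ + M₃) ∈ s₁.1.A ∪ s₂.1.A ∪ s₃.1.A := by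
      rw [hcov]; trivial
    rcases hx with (h | h) | h
    · exact hM₁ _ (by omega) h
    · exact hM₂ _ (by omega) h
    · exact hM₃ _ (by omega) h
end

section
/- For an infinite cardinal κ, every (<κ)-inseparable set of vertices in a graph G contains the branch vertices of a subdivision of the complete graph K_κ contained in G. -/
open Set

universe u

open Set Cardinal SimpleGraph

/-!
Schedule the steps "choose branch vertex `i`" and "join branch vertices `i < j` by a path" in
a well-founded order in which every step has fewer than `κ` predecessors and each joining step
comes after its two branch vertices; when `ι` carries the well-order of type `κ.ord`, order the
steps lexicographically by their larger and then their smaller index. Then run through the steps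
greedily. The walks chosen before a step have fewer than `κ` vertices, so `K` still has a fresh
vertex for a branch vertex, and by `(<κ)`-inseparability two branch vertices are joined by a path
avoiding all earlier vertices except its ends. Hence two of these paths meet only in branch
vertices, and no path passes through a branch vertex other than its ends.
-/

theorem WellFounded.exists_forall_of_forall_exists {α X : Type*} {r : α → α → Prop}
    (hr : WellFounded r) (P : ∀ a, (∀ b, r b a → X) → X → Prop)
    (h : ∀ a f, ∃ x, P a f x) : ∃ g : α → X, ∀ a, P a (fun b _ => g b) (g a) :=
  ⟨hr.fix fun a f => (h a f).choose, fun a => by rw [hr.fix_eq]; exact (h a _).choose_spec⟩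

theorem Cardinal.mk_iUnion_lt_of_finite {α σ : Type u} {κ : Cardinal.{u}} {A : σ → Set α}
    (hκ : ℵ₀ ≤ κ) (hσ : #σ < κ) (hA : ∀ s, (A s).Finite) : #(⋃ s, A s) < κ := by
  rcases lt_or_ge #σ ℵ₀ with hσ' | hσ'
  · have : Finite σ := lt_aleph0_iff_finite.1 hσ'
    exact (finite_iUnion hA).lt_aleph0.trans_le hκ
  · calc #(⋃ s, A s) ≤ #σ * ℵ₀ :=
          (mk_iUnion_le A).trans (by gcongr; exact ciSup_le' fun s => (hA s).lt_aleph0.le)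
      _ = #σ := mul_aleph0_eq hσ'
      _ < κ := hσ

section

variable {V : Type u}

def LtInseparable (G : SimpleGraph V) (κ : Cardinal.{u}) (K : Set V) : Prop :=
  ∀ x ∈ K, ∀ y ∈ K, x ≠ y → ∀ F : Set V, #F < κ → x ∉ F → y ∉ F →
    ∃ w : G.Walk x y, ∀ z ∈ w.support, z ∉ F

theorem LtInseparable.exists_isPath_avoiding {G : SimpleGraph V} {κ : Cardinal.{u}} {K : Set V}
    (hK : LtInseparable G κ K) {x y : V} (hx : x ∈ K) (hy : y ∈ K) {F : Set V} (hF : #F < κ) :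
    ∃ w : G.Walk x y, w.IsPath ∧ ∀ z ∈ w.support, z ∈ F → z = x ∨ z = y := by
  classical
  obtain rfl | hxy := eq_or_ne x y
  · exact ⟨.nil, .nil, by simp⟩
  obtain ⟨w, hw⟩ := hK x hx y hy hxy (F \ {x, y})
    ((mk_le_mk_of_subset sdiff_subset).trans_lt hF) (by simp) (by simp)
  refine ⟨w.bypass, w.bypass_isPath, fun z hz hzF => ?_⟩
  by_contra hne
  exact hw z (w.support_bypass_subset_support hz) ⟨hzF, by simpa using hne⟩

abbrev WalkBetween (G : SimpleGraph V) (K : Set V) : Type u := (x : K) × (y : K) × G.Walk x y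

end

/-- `.inl i` is the step choosing branch vertex `i`, `.inr ⟨(i, j), _⟩` the step joining the
branch vertices `i < j` by a path. -/
abbrev TKStep (ι : Type u) [LinearOrder ι] : Type u := ι ⊕ {q : ι × ι // q.1 < q.2}

structure TKSchedule (ι : Type u) [LinearOrder ι] (κ : Cardinal.{u}) where
  r : TKStep ι → TKStep ι → Prop
  wf : WellFounded r
  total : ∀ s t, s ≠ t → r s t ∨ r t s
  fst_r_edge : ∀ q, r (.inl q.1.1) (.inr q)
  snd_r_edge : ∀ q, r (.inl q.1.2) (.inr q)
  mk_lt : ∀ t, #{s // r s t} < κ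

namespace TKSchedule

variable {V ι : Type u} [LinearOrder ι] {κ : Cardinal.{u}} (S : TKSchedule ι κ)
  {G : SimpleGraph V} {K : Set V}

def verticesBefore (t : TKStep ι) (f : ∀ s, S.r s t → WalkBetween G K) : Set V :=
  ⋃ s : {s // S.r s t}, {z | z ∈ (f s.1 s.2).2.2.support}

theorem mk_verticesBefore_lt (hκ : ℵ₀ ≤ κ) (t : TKStep ι)
    (f : ∀ s, S.r s t → WalkBetween G K) :
    #(S.verticesBefore t f) < κ :=
  mk_iUnion_lt_of_finite hκ (S.mk_lt t) fun s => (f s.1 s.2).2.2.support.finite_toSet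

def IsGreedyChoice : ∀ t, (∀ s, S.r s t → WalkBetween G K) → WalkBetween G K → Prop
  | .inl _, f, w => (w.1 : V) ∉ S.verticesBefore _ f
  | .inr q, f, w => w.1 = (f _ (S.fst_r_edge q)).1 ∧ w.2.1 = (f _ (S.snd_r_edge q)).1 ∧
      w.2.2.IsPath ∧ ∀ z ∈ w.2.2.support, z ∈ S.verticesBefore _ f → z = w.1 ∨ z = w.2.1

theorem exists_isGreedyChoice (hκ : ℵ₀ ≤ κ) (hcard : κ ≤ #K) (hK : LtInseparable G κ K)
    (t : TKStep ι) (f : ∀ s, S.r s t → WalkBetween G K) : ∃ w, S.IsGreedyChoice t f w := by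
  have hsmall := S.mk_verticesBefore_lt hκ t f
  cases t with
  | inl i =>
    obtain ⟨v, hvK, hv⟩ : (K \ S.verticesBefore _ f).Nonempty :=
      sdiff_nonempty.2 fun hsub => (hcard.trans (mk_le_mk_of_subset hsub)).not_gt hsmall
    exact ⟨⟨⟨v, hvK⟩, ⟨v, hvK⟩, .nil⟩, hv⟩
  | inr q =>
    obtain ⟨w, hw, hwF⟩ := hK.exists_isPath_avoiding (f _ (S.fst_r_edge q)).1.2
      (f _ (S.snd_r_edge q)).1.2 hsmall
    exact ⟨⟨_, _, w⟩, rfl, rfl, hw, hwF⟩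

def IsGreedy (g : TKStep ι → WalkBetween G K) : Prop :=
  ∀ t, S.IsGreedyChoice t (fun s _ => g s) (g t)

theorem exists_isGreedy (hκ : ℵ₀ ≤ κ) (hcard : κ ≤ #K) (hK : LtInseparable G κ K) :
    ∃ g : TKStep ι → WalkBetween G K, S.IsGreedy g :=
  S.wf.exists_forall_of_forall_exists _ (S.exists_isGreedyChoice hκ hcard hK)

def branch (g : TKStep ι → WalkBetween G K) (i : ι) : V := (g (.inl i)).1

variable {S} {g : TKStep ι → WalkBetween G K}

theorem IsGreedy.injective_branch (hg : S.IsGreedy g) : Function.Injective (branch g) := by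
  have hne_of_r : ∀ {i j}, S.r (.inl i) (.inl j) → branch g i ≠ branch g j :=
    fun {i j} h hij => hg (.inl j) (mem_iUnion.2
      ⟨⟨_, h⟩, show branch g j ∈ _ from hij ▸ (g _).2.2.start_mem_support⟩)
  intro i j hij
  by_contra hne
  rcases S.total (.inl i) (.inl j) (by simpa using hne) with h | h
  · exact hne_of_r h hij
  · exact hne_of_r h hij.symm

theorem IsGreedy.fst_edge (hg : S.IsGreedy g) (q : {q : ι × ι // q.1 < q.2}) :
    ((g (.inr q)).1 : V) = branch g q.1.1 :=
  congrArg Subtype.val (hg (.inr q)).1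

theorem IsGreedy.snd_edge (hg : S.IsGreedy g) (q : {q : ι × ι // q.1 < q.2}) :
    ((g (.inr q)).2.1 : V) = branch g q.1.2 :=
  congrArg Subtype.val (hg (.inr q)).2.1

theorem IsGreedy.eq_branch_of_mem_edge_of_r (hg : S.IsGreedy g) {s : TKStep ι}
    {q : {q : ι × ι // q.1 < q.2}} (h : S.r s (.inr q)) {z : V} (hzs : z ∈ (g s).2.2.support)
    (hz : z ∈ (g (.inr q)).2.2.support) : z = branch g q.1.1 ∨ z = branch g q.1.2 := by
  rw [← hg.fst_edge, ← hg.snd_edge]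
  exact (hg (.inr q)).2.2.2 z hz (mem_iUnion.2 ⟨⟨s, h⟩, hzs⟩)

theorem IsGreedy.not_mem_range_branch_of_mem_edge (hg : S.IsGreedy g)
    (q : {q : ι × ι // q.1 < q.2}) {z : V} (hz : z ∈ (g (.inr q)).2.2.support)
    (h₁ : z ≠ branch g q.1.1) (h₂ : z ≠ branch g q.1.2) : z ∉ range (branch g) := by
  rintro ⟨k, rfl⟩
  rcases S.total (.inl k) (.inr q) (by simp) with h | h
  · exact (hg.eq_branch_of_mem_edge_of_r h (g _).2.2.start_mem_support hz).elim h₁ h₂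
  · exact hg (.inl k) (mem_iUnion.2 ⟨⟨_, h⟩, hz⟩)

theorem IsGreedy.eq_branch_of_mem_edge_of_mem_edge (hg : S.IsGreedy g)
    {q q' : {q : ι × ι // q.1 < q.2}} (h : S.r (.inr q) (.inr q')) {z : V}
    (hz : z ∈ (g (.inr q)).2.2.support) (hz' : z ∈ (g (.inr q')).2.2.support) :
    (z = branch g q.1.1 ∨ z = branch g q.1.2) ∧
      (z = branch g q'.1.1 ∨ z = branch g q'.1.2) := by
  have h' := hg.eq_branch_of_mem_edge_of_r h hz hz'
  refine ⟨?_, h'⟩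
  by_contra hne
  rw [not_or] at hne
  exact hg.not_mem_range_branch_of_mem_edge q hz hne.1 hne.2
    (h'.elim (⟨_, ·.symm⟩) (⟨_, ·.symm⟩))

end TKSchedule

namespace TKStep

variable {ι T : Type u} [LinearOrder ι] [LinearOrder T] (e : ι → T)

-- `⊥` puts the choice of branch vertex `i` before every path whose larger end is `i`.
def key : TKStep ι → T ×ₗ WithBot T
  | .inl i => toLex (e i, ⊥)
  | .inr q => toLex (max (e q.1.1) (e q.1.2), WithBot.some (min (e q.1.1) (e q.1.2)))

variable {e}

theorem key_injective (he : Function.Injective e) : Function.Injective (key e) := by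
  rintro (i | ⟨⟨i, j⟩, hij⟩) (i' | ⟨⟨i', j'⟩, hij'⟩) h <;>
    simp only [key, toLex_inj, Prod.mk.injEq, WithBot.coe_ne_bot, WithBot.bot_ne_coe,
      WithBot.coe_inj, and_true, and_false] at h
  · rw [he h]
  · have : e i = e i' ∧ e j = e j' ∨ e i = e j' ∧ e j = e i' := by grind
    rcases this with ⟨h₁, h₂⟩ | ⟨h₁, h₂⟩
    · obtain rfl := he h₁; obtain rfl := he h₂; rfl
    · exact absurd ((he h₁ ▸ hij').trans (he h₂ ▸ hij)) (lt_irrefl _)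

theorem key_inl_lt_key_inr {i : ι} (q : {q : ι × ι // q.1 < q.2})
    (hi : i = q.1.1 ∨ i = q.1.2) :
    key e (.inl i) < key e (.inr q) := by
  have hle : e i ≤ max (e q.1.1) (e q.1.2) := by rcases hi with rfl | rfl <;> simp
  rcases hle.lt_or_eq with hlt | heq
  · exact Prod.Lex.toLex_lt_toLex.2 (.inl hlt)
  · exact Prod.Lex.toLex_lt_toLex.2 (.inr ⟨heq, WithBot.bot_lt_coe _⟩)

theorem mk_key_lt_lt {κ : Cardinal.{u}} (hκ : ℵ₀ ≤ κ) (hT : ∀ a : T, #(Iio a) < κ)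
    (he : Function.Injective e) (t : TKStep ι) : #{s // key e s < key e t} < κ := by
  set m := (ofLex (key e t)).1
  have hm : #(Iic m) < κ := by
    rw [← Iio_insert]
    exact mk_insert_le.trans_lt (add_lt_of_lt hκ (hT m) (one_lt_aleph0.trans_le hκ))
  have hm' : #(Iic (m : WithBot T)) < κ := by
    have : Iic (m : WithBot T) ⊆ insert ⊥ (WithBot.some '' Iic m) := by
      intro x hx
      induction x using WithBot.recBotCoe <;> simp_all
    exact (mk_le_mk_of_subset this).trans_lt (mk_insert_le.trans_lt
      (add_lt_of_lt hκ (mk_image_le.trans_lt hm) (one_lt_aleph0.trans_le hκ)))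
  have hmem : ∀ s : {s // key e s < key e t},
      ofLex (key e s.1) ∈ Iic m ×ˢ Iic (m : WithBot T) := by
    rintro ⟨s, hs⟩
    have h₁ : (ofLex (key e s)).1 ≤ m := (Prod.Lex.lt_iff'.1 hs).1
    refine ⟨h₁, le_trans ?_ (WithBot.coe_le_coe.2 h₁)⟩
    cases s with
    | inl i => exact bot_le
    | inr q => exact WithBot.coe_le_coe.2 min_le_max
  calc #{s // key e s < key e t} ≤ #(Iic m ×ˢ Iic (m : WithBot T)) :=
        mk_le_of_injective (f := fun s => ⟨_, hmem s⟩) fun s s' h =>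
          Subtype.ext (key_injective he (congrArg (fun x => toLex x.1) h))
    _ = #(Iic m) * #(Iic (m : WithBot T)) := by
        rw [mk_congr (Equiv.Set.prod _ _), mk_prod, lift_id, lift_id]
    _ < κ := mul_lt_of_lt hκ hm hm'

end TKStep

def TKSchedule.ofInjective {ι T : Type u} [LinearOrder ι] [LinearOrder T] [WellFoundedLT T]
    {κ : Cardinal.{u}} (hκ : ℵ₀ ≤ κ) (hT : ∀ a : T, #(Iio a) < κ) {e : ι → T}
    (he : Function.Injective e) : TKSchedule ι κ where
  r s t := TKStep.key e s < TKStep.key e t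
  wf := InvImage.wf _ wellFounded_lt
  total _ _ hst := lt_or_gt_of_ne ((TKStep.key_injective he).ne hst)
  fst_r_edge q := TKStep.key_inl_lt_key_inr q (.inl rfl)
  snd_r_edge q := TKStep.key_inl_lt_key_inr q (.inr rfl)
  mk_lt := TKStep.mk_key_lt_lt hκ hT he

/-- every `(<κ)`-inseparable set of vertices contains the branch
vertices of a subdivision of `K_κ`, for `κ` infinite. -/
theorem inseparable_contains_TK {V : Type u} (G : SimpleGraph V) (κ : Cardinal.{u})
    (hκ : Cardinal.aleph0 ≤ κ) (K : Set V) (hcard : κ ≤ Cardinal.mk ↥K)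
    (hinsep : ∀ x ∈ K, ∀ y ∈ K, x ≠ y → ∀ F : Set V, Cardinal.mk ↥F < κ →
      x ∉ F → y ∉ F → ∃ w : G.Walk x y, ∀ z ∈ w.support, z ∉ F)
    (ι : Type u) [LinearOrder ι] (hι : Cardinal.mk ι = κ) :
    ∃ b : ι → V, Function.Injective b ∧ Set.range b ⊆ K ∧
      ∃ p : ∀ i j : ι, i < j → G.Walk (b i) (b j),
        (∀ i j h, (p i j h).IsPath) ∧
        (∀ i j h, ∀ x ∈ (p i j h).support, x ≠ b i → x ≠ b j → x ∉ Set.range b) ∧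
        (∀ i j h i' j' h', (i, j) ≠ (i', j') →
          ∀ x, x ∈ (p i j h).support → x ∈ (p i' j' h').support →
            (x = b i ∨ x = b j) ∧ (x = b i' ∨ x = b j')) := by
  obtain ⟨e⟩ : Nonempty (ι ≃ κ.ord.ToType) :=
    Cardinal.eq.1 (by rw [hι, mk_toType, card_ord])
  let S := TKSchedule.ofInjective hκ (fun a => by simpa using mk_Iio_lt a) e.injective
  obtain ⟨g, hg⟩ := S.exists_isGreedy hκ hcard hinsep
  let p i j (h : i < j) : G.Walk (TKSchedule.branch g i) (TKSchedule.branch g j) :=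
    (g (.inr ⟨(i, j), h⟩)).2.2.copy (hg.fst_edge _) (hg.snd_edge _)
  refine ⟨_, hg.injective_branch, ?_, p, fun i j h => ?_, fun i j h x hx => ?_,
    fun i j h i' j' h' hne x hx hx' => ?_⟩
  · rintro _ ⟨i, rfl⟩
    exact (g _).1.2
  · exact (Walk.isPath_copy _ _ _).2 ((hg (.inr _)).2.2.1)
  · exact hg.not_mem_range_branch_of_mem_edge _ (by simpa [p] using hx)
  · simp only [p, Walk.support_copy] at hx hx'
    have hqq' : (.inr ⟨(i, j), h⟩ : TKStep ι) ≠ .inr ⟨(i', j'), h'⟩ := by simpa using hne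
    rcases S.total _ _ hqq' with hr | hr
    · exact hg.eq_branch_of_mem_edge_of_mem_edge hr hx hx'
    · exact (hg.eq_branch_of_mem_edge_of_mem_edge hr hx' hx).symm
end

section
/- If G is a one-way infinite ray v₀v₁v₂… with (unique) end ω, then the end tangle τ_ω is not a closed subset of the space of finite-order oriented separations of G: the separation (V,∅) lies outside τ_ω but agrees on every finite vertex set Z with some separation in τ_ω. -/
open Set

universe u

/-- The one-way infinite ray `v₀v₁v₂…` as a graph on `ℕ`. -/
def RayGraph : SimpleGraph ℕ := SimpleGraph.fromRel (fun a b => b = a + 1)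

/-- The separation `({n ≤ M}, {n ≥ M})` of the ray. -/
def tSep (M : ℕ) : FinSep RayGraph :=
  ⟨⟨{n | n ≤ M}, {n | M ≤ n},
    by ext n; simp [le_total n M],
    by
      rintro a ⟨ha, ha'⟩ b ⟨hb, hb'⟩ hadj
      simp only [Set.mem_setOf_eq] at ha ha' hb hb'
      rcases hadj with ⟨hne, h | h⟩ <;> omega⟩,
   by
    have : {n | n ≤ M} ∩ {n | M ≤ n} = {M} := by
      ext n; simp only [Set.mem_inter_iff, Set.mem_setOf_eq, Set.mem_singleton_iff]; omega
    rw [this]; exact Set.finite_singleton M⟩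

lemma tSep_mem_endTangle (ω : GraphEnd RayGraph) (M : ℕ) : tSep M ∈ endTangle ω := by
  intro R _
  have hfin : {n | R.f n < M}.Finite := by
    have : {n | R.f n < M} = R.f ⁻¹' (Set.Iio M) := rfl
    rw [this]
    exact Set.Finite.preimage R.inj.injOn (Set.finite_Iio M)
  obtain ⟨N, hN⟩ := hfin.bddAbove
  refine ⟨N + 1, fun n hn => ?_⟩
  simp only [tSep, Set.mem_setOf_eq]
  by_contra h
  have : n ∈ {n | R.f n < M} := by simp only [Set.mem_setOf_eq]; omega
  have := hN this
  omega

lemma open_induction (O : Set (FinSep RayGraph))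
    (hO : TopologicalSpace.GenerateOpen
      {O | ∃ Z AZ BZ : Set ℕ, Z.Finite ∧
        O = {s : FinSep RayGraph | s.1.A ∩ Z = AZ ∧ s.1.B ∩ Z = BZ}} O)
    (s : FinSep RayGraph) (hA : s.1.A = Set.univ) (hB : s.1.B = ∅) (hs : s ∈ O) :
    ∃ Z : Set ℕ, Z.Finite ∧
      ∀ t : FinSep RayGraph, t.1.A ∩ Z = Z → t.1.B ∩ Z = ∅ → t ∈ O := by
  induction hO with
  | basic U hU =>
    obtain ⟨Z, AZ, BZ, hZ, rfl⟩ := hU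
    obtain ⟨hs1, hs2⟩ := hs
    rw [hA, Set.univ_inter] at hs1
    rw [hB, Set.empty_inter] at hs2
    exact ⟨Z, hZ, fun t ht1 ht2 => ⟨hs1 ▸ ht1, hs2 ▸ ht2⟩⟩
  | univ => exact ⟨∅, Set.finite_empty, fun t _ _ => trivial⟩
  | inter U V _ _ ihU ihV =>
    obtain ⟨Z1, hZ1, h1⟩ := ihU hs.1
    obtain ⟨Z2, hZ2, h2⟩ := ihV hs.2
    refine ⟨Z1 ∪ Z2, hZ1.union hZ2, fun t ht1 ht2 => ?_⟩
    have hsubA : Z1 ∪ Z2 ⊆ t.1.A := by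
      intro x hx
      have : x ∈ t.1.A ∩ (Z1 ∪ Z2) := by rw [ht1]; exact hx
      exact this.1
    have hB1 : t.1.B ∩ Z1 = ∅ := by
      apply Set.eq_empty_of_subset_empty
      intro x hx
      have : x ∈ t.1.B ∩ (Z1 ∪ Z2) := ⟨hx.1, Or.inl hx.2⟩
      rw [ht2] at this; exact this
    have hB2 : t.1.B ∩ Z2 = ∅ := by
      apply Set.eq_empty_of_subset_empty
      intro x hx
      have : x ∈ t.1.B ∩ (Z1 ∪ Z2) := ⟨hx.1, Or.inr hx.2⟩
      rw [ht2] at this; exact this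
    refine ⟨h1 t ?_ hB1, h2 t ?_ hB2⟩
    · exact Set.inter_eq_self_of_subset_right fun x hx => hsubA (Or.inl hx)
    · exact Set.inter_eq_self_of_subset_right fun x hx => hsubA (Or.inr hx)
  | sUnion S hS ih =>
    obtain ⟨U, hUS, hsU⟩ := hs
    obtain ⟨Z, hZ, h⟩ := ih U hUS hsU
    exact ⟨Z, hZ, fun t ht1 ht2 => ⟨U, hUS, h t ht1 ht2⟩⟩

lemma tSep_agrees {Z : Set ℕ} {M : ℕ} (hM : ∀ z ∈ Z, z < M) :
    (tSep M).1.A ∩ Z = Z ∧ (tSep M).1.B ∩ Z = ∅ := by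
  constructor
  · apply Set.inter_eq_self_of_subset_right
    intro z hz
    exact le_of_lt (hM z hz)
  · apply Set.eq_empty_of_subset_empty
    rintro x ⟨hx1, hx2⟩
    have := hM x hx2
    simp only [tSep, Set.mem_setOf_eq] at hx1
    omega

lemma ray_not_in_endTangle (ω : GraphEnd RayGraph) (s : FinSep RayGraph)
    (hB : s.1.B = ∅) : s ∉ endTangle ω := by
  intro h
  obtain ⟨R, hR⟩ := ω.nonempty
  obtain ⟨N, hN⟩ := h R hR
  have := hN N le_rfl
  rw [hB] at this
  exact this

/-- the end tangle of the single ray is not closed; the separation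
`(V, ∅)` lies outside it but agrees on every finite set with a member of it. -/
theorem ray_endTangle_not_closed (ω : GraphEnd RayGraph) :
    ¬ IsClosed (endTangle ω) ∧
    ∀ s : FinSep RayGraph, s.1.A = Set.univ → s.1.B = ∅ →
      s ∉ endTangle ω ∧
      ∀ Z : Set ℕ, Z.Finite → ∃ t ∈ endTangle ω,
        t.1.A ∩ Z = s.1.A ∩ Z ∧ t.1.B ∩ Z = s.1.B ∩ Z := by
  constructor
  · intro hcl
    set s₀ : FinSep RayGraph :=
      ⟨⟨Set.univ, ∅, by simp, by simp⟩, by simp⟩ with hs₀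
    have hs₀nt : s₀ ∉ endTangle ω := ray_not_in_endTangle ω s₀ rfl
    have hopen : IsOpen (endTangle ω)ᶜ := hcl.isOpen_compl
    obtain ⟨Z, hZfin, h⟩ := open_induction _ hopen s₀ rfl rfl hs₀nt
    obtain ⟨M, hM⟩ : ∃ M, ∀ z ∈ Z, z < M := by
      obtain ⟨N, hN⟩ := hZfin.bddAbove
      exact ⟨N + 1, fun z hz => Nat.lt_succ_of_le (hN hz)⟩
    obtain ⟨h1, h2⟩ := tSep_agrees hM
    exact h (tSep M) h1 h2 (tSep_mem_endTangle ω M)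
  · intro s hA hB
    refine ⟨ray_not_in_endTangle ω s hB, fun Z hZfin => ?_⟩
    obtain ⟨M, hM⟩ : ∃ M, ∀ z ∈ Z, z < M := by
      obtain ⟨N, hN⟩ := hZfin.bddAbove
      exact ⟨N + 1, fun z hz => Nat.lt_succ_of_le (hN hz)⟩
    obtain ⟨h1, h2⟩ := tSep_agrees hM
    refine ⟨tSep M, tSep_mem_endTangle ω M, ?_, ?_⟩
    · rw [hA, Set.univ_inter, h1]
    · rw [hB, Set.empty_inter, h2]
end

section
/- Let τ be an end tangle of S in a graph G and set K = ⋂{B : (A,B) ∈ τ}. If K is infinite, then K is an ℵ₀-block of G and is an absolute decider for τ, i.e. τ = {(A,B) ∈ S⃗ : K ⊆ B}. -/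
open Set

universe u

section Aux

variable {V : Type u} {G : SimpleGraph V}

/-- A walk from `A \ B` to `B \ A` must pass through `A ∩ B`. -/
lemma walk_cross (s : FinSep G) : ∀ {a b : V} (w : G.Walk a b),
    a ∈ s.1.A \ s.1.B → b ∈ s.1.B \ s.1.A → ∃ x ∈ w.support, x ∈ s.1.A ∩ s.1.B := by
  intro a b w
  induction w with
  | nil => exact fun ha hb => (ha.2 hb.1).elim
  | @cons u v b h w ih =>
    intro ha hb
    by_cases hv : v ∈ s.1.A ∩ s.1.B
    · exact ⟨v, by simp [SimpleGraph.Walk.support_cons], hv⟩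
    · have hvu : v ∈ s.1.A ∪ s.1.B := by rw [s.1.union_eq]; trivial
      rcases hvu with hA | hB
      · obtain ⟨x, hx, hx2⟩ := ih ⟨hA, fun hB => hv ⟨hA, hB⟩⟩ hb
        exact ⟨x, by simp [SimpleGraph.Walk.support_cons, hx], hx2⟩
      · exact (s.1.no_edge u ha v ⟨hB, fun hA => hv ⟨hA, hB⟩⟩ h).elim

/-- Every ray eventually lives on one strict side of a finite-order separation. -/
lemma ray_tail_side (s : FinSep G) (R : GraphRay G) :
    HasTailIn R (s.1.A \ s.1.B) ∨ HasTailIn R (s.1.B \ s.1.A) := by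
  have hfin : (R.f ⁻¹' (s.1.A ∩ s.1.B)).Finite := s.2.preimage R.inj.injOn
  obtain ⟨M, hM⟩ := hfin.bddAbove
  have hN : ∀ n ≥ M + 1, R.f n ∉ s.1.A ∩ s.1.B := by
    intro n hn hmem
    have : n ≤ M := hM hmem
    omega
  have side : ∀ n, R.f n ∉ s.1.A ∩ s.1.B →
      R.f n ∈ s.1.A \ s.1.B ∨ R.f n ∈ s.1.B \ s.1.A := by
    intro n hn
    have : R.f n ∈ s.1.A ∪ s.1.B := by rw [s.1.union_eq]; trivial
    rcases this with h | h
    · exact Or.inl ⟨h, fun hb => hn ⟨h, hb⟩⟩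
    · exact Or.inr ⟨h, fun ha => hn ⟨ha, h⟩⟩
  rcases side (M + 1) (hN _ le_rfl) with h | h
  · left; refine ⟨M + 1, ?_⟩
    intro n hn
    induction n, hn using Nat.le_induction with
    | base => exact h
    | succ n hn ih =>
      rcases side (n + 1) (hN _ (by omega)) with h' | h'
      · exact h'
      · exact (s.1.no_edge _ ih _ h' (R.adj n)).elim
  · right; refine ⟨M + 1, ?_⟩
    intro n hn
    induction n, hn using Nat.le_induction with
    | base => exact h
    | succ n hn ih =>
      rcases side (n + 1) (hN _ (by omega)) with h' | h'
      · exact (s.1.no_edge _ h' _ ih (R.adj n).symm).elim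
      · exact h'

lemma rayEquiv_symm {R R' : GraphRay G} (h : RayEquiv G R R') : RayEquiv G R' R := by
  intro F hF
  obtain ⟨m, n, w, hw⟩ := h F hF
  exact ⟨n, m, w.reverse, fun x hx => hw x
    (by rwa [SimpleGraph.Walk.support_reverse, List.mem_reverse] at hx)⟩

/-- Equivalent rays cannot have tails on opposite strict sides. -/
lemma no_cross (s : FinSep G) {R R' : GraphRay G} (h : RayEquiv G R R')
    {N N' : ℕ} (hR : ∀ n ≥ N, R.f n ∈ s.1.A \ s.1.B)
    (hR' : ∀ n ≥ N', R'.f n ∈ s.1.B \ s.1.A) : False := by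
  set F : Set V := (s.1.A ∩ s.1.B) ∪ (R.f '' {i | i < N}) ∪ (R'.f '' {i | i < N'}) with hF
  have hFfin : F.Finite :=
    (s.2.union ((Set.finite_Iio N).image _)).union ((Set.finite_Iio N').image _)
  obtain ⟨m, n, w, hw⟩ := h F hFfin
  have hm : N ≤ m := by
    by_contra hlt
    exact hw _ w.start_mem_support (by
      rw [hF]; exact Or.inl (Or.inr (Set.mem_image_of_mem _ (show m < N by omega))))
  have hn : N' ≤ n := by
    by_contra hlt
    exact hw _ w.end_mem_support (by
      rw [hF]; exact Or.inr (Set.mem_image_of_mem _ (show n < N' by omega)))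
  obtain ⟨x, hx, hx2⟩ := walk_cross s w (hR m hm) (hR' n hn)
  exact hw x hx (by rw [hF]; exact Or.inl (Or.inl hx2))

/-- A tangle induced by an end orients every finite-order separation. -/
lemma mem_or_rev_mem (ω : GraphEnd G) (s : FinSep G) :
    s ∈ endTangle ω ∨ s.rev ∈ endTangle ω := by
  obtain ⟨R0, hR0⟩ := ω.nonempty
  rcases ray_tail_side s R0 with ⟨N0, h0⟩ | ⟨N0, h0⟩
  · right
    intro R hR
    rcases ray_tail_side s R with ⟨N, hN⟩ | ⟨N, hN⟩
    · exact ⟨N, fun n hn => (hN n hn).1⟩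
    · exact (no_cross s ((ω.mem_iff R0 hR0 R).mp hR) h0 hN).elim
  · left
    intro R hR
    rcases ray_tail_side s R with ⟨N, hN⟩ | ⟨N, hN⟩
    · exact (no_cross s (rayEquiv_symm ((ω.mem_iff R0 hR0 R).mp hR)) hN h0).elim
    · exact ⟨N, fun n hn => (hN n hn).1⟩

end Aux

/-- if `K = ⋂ {B : (A,B) ∈ τ}` is infinite for an end tangle `τ`,
then `K` is an `ℵ₀`-block and an absolute decider for `τ`. -/
theorem kernel_infinite_block {V : Type u} (G : SimpleGraph V) (ω : GraphEnd G)
    (K : Set V) (hK : K = ⋂ s ∈ endTangle ω, s.1.B) (hinf : K.Infinite) :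
    Aleph0Block G K ∧ endTangle ω = {s : FinSep G | K ⊆ s.1.B} := by
  have hKB : ∀ s ∈ endTangle ω, K ⊆ s.1.B := by
    intro s hs x hx
    rw [hK] at hx
    exact Set.mem_iInter₂.mp hx s hs
  have heq : endTangle ω = {s : FinSep G | K ⊆ s.1.B} := by
    ext s
    constructor
    · exact fun hs => hKB s hs
    · intro hs
      rcases mem_or_rev_mem ω s with h | h
      · exact h
      · exfalso
        have hA : K ⊆ s.1.A := hKB _ h
        exact hinf (s.2.subset (Set.subset_inter hA hs))
  have hins : FinInseparable G K := by
    rintro s x hx y hy ⟨hxa, hyb⟩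
    rcases mem_or_rev_mem ω s with h | h
    · exact hxa.2 (hKB s h hx)
    · exact hyb.2 (hKB _ h hy)
  refine ⟨⟨hinf, hins, ?_⟩, heq⟩
  intro K' hKK' hK'inf hK'ins
  refine Set.Subset.antisymm ?_ hKK'
  intro v hv
  rw [hK]
  refine Set.mem_iInter₂.mpr fun s hs => ?_
  by_contra hvB
  have hvA : v ∈ s.1.A := by
    have hvu : v ∈ s.1.A ∪ s.1.B := by rw [s.1.union_eq]; trivial
    rcases hvu with h | h
    · exact h
    · exact (hvB h).elim
  obtain ⟨x, hxK, hxAB⟩ := (hinf.diff s.2).nonempty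
  have hxB : x ∈ s.1.B := hKB s hs hxK
  exact hK'ins s v hv x (hKK' hxK)
    ⟨⟨hvA, hvB⟩, ⟨hxB, fun hA => hxAB ⟨hA, hxB⟩⟩⟩
end

section
/- Let τ be an end tangle of S in a graph G and set K = ⋂{B : (A,B) ∈ τ}. If K is finite, then τ is not closed in the separation topology: the separation (V,K) does not lie in τ, yet for every finite Z ⊆ V there is (A',B') ∈ τ inducing the same separation on Z as (V,K). -/
/-!
Every `(A, B) ∈ τ` contains `K` in its `B`-side, and `τ` is closed under
`(A₁, B₁), (A₂, B₂) ↦ (A₁ ∪ A₂, B₁ ∩ B₂)`. Given a finite `Z`, joining, for each vertex of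
`Z \ K`, a member of `τ` whose `B`-side misses it yields `(A, B) ∈ τ` with `B ∩ Z = K ∩ Z`;
adding `Z` to `A` keeps it in `τ` and makes it agree with `(V, K)` on `Z`. So `(V, K)` lies in
the closure of `τ`, but not in `τ`: a ray of `ω` cannot have a tail in the finite set `K`.
-/

open Set

universe u

namespace FinSep

variable {V : Type u} {G : SimpleGraph V}

def emptyLeft : FinSep G :=
  ⟨⟨∅, univ, empty_union _, fun _ ha _ _ => ha.1.elim⟩, by simp⟩

def univLeft (B : Set V) (hB : B.Finite) : FinSep G :=
  ⟨⟨univ, B, univ_union B, fun _ _ _ hb => (hb.2 (mem_univ _)).elim⟩, by simpa using hB⟩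

lemma mem_A_of_notMem_B (s : FinSep G) {x : V} (hx : x ∉ s.1.B) : x ∈ s.1.A :=
  ((s.1.union_eq ▸ mem_univ x : x ∈ s.1.A ∪ s.1.B)).resolve_right hx

def join (s t : FinSep G) : FinSep G :=
  ⟨⟨s.1.A ∪ t.1.A, s.1.B ∩ t.1.B,
    eq_univ_of_forall fun x => by
      by_cases hs : x ∈ s.1.B <;> by_cases ht : x ∈ t.1.B
      · exact Or.inr ⟨hs, ht⟩
      · exact Or.inl (Or.inr (t.mem_A_of_notMem_B ht))
      all_goals exact Or.inl (Or.inl (s.mem_A_of_notMem_B hs)),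
    by
      rintro a ⟨_, haB⟩ b ⟨⟨hbs, hbt⟩, hbA⟩
      rcases not_and_or.mp haB with h | h
      · exact s.1.no_edge a ⟨s.mem_A_of_notMem_B h, h⟩ b ⟨hbs, fun hb => hbA (Or.inl hb)⟩
      · exact t.1.no_edge a ⟨t.mem_A_of_notMem_B h, h⟩ b ⟨hbt, fun hb => hbA (Or.inr hb)⟩⟩,
   (s.2.union t.2).subset fun _ ⟨hA, hBs, hBt⟩ => hA.imp (⟨·, hBs⟩) (⟨·, hBt⟩)⟩

def extendLeft (s : FinSep G) (X : Set V) (hX : X.Finite) : FinSep G :=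
  ⟨⟨s.1.A ∪ X, s.1.B, by rw [union_right_comm, s.1.union_eq, univ_union],
    by
      rintro a ⟨-, haB⟩ b ⟨hbB, hbA⟩
      exact s.1.no_edge a ⟨s.mem_A_of_notMem_B haB, haB⟩ b ⟨hbB, fun hb => hbA (Or.inl hb)⟩⟩,
   (s.2.union hX).subset fun _ ⟨hA, hB⟩ => hA.imp (⟨·, hB⟩) id⟩

def AgreeOn (Z : Set V) (t s : FinSep G) : Prop :=
  t.1.A ∩ Z = s.1.A ∩ Z ∧ t.1.B ∩ Z = s.1.B ∩ Z

lemma AgreeOn.mono {Z Z' : Set V} {t s : FinSep G} (hZ : Z ⊆ Z') (h : AgreeOn Z' t s) :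
    AgreeOn Z t s := by
  constructor
  · rw [← inter_eq_right.mpr hZ, ← inter_assoc, h.1, inter_assoc]
  · rw [← inter_eq_right.mpr hZ, ← inter_assoc, h.2, inter_assoc]

lemma exists_agreeOn_subset_of_isOpen {U : Set (FinSep G)} (hU : IsOpen U) {s : FinSep G}
    (hs : s ∈ U) : ∃ Z : Set V, Z.Finite ∧ ∀ t, AgreeOn Z t s → t ∈ U := by
  induction hU with
  | basic U hU =>
    obtain ⟨Z, AZ, BZ, hZ, rfl⟩ := hU
    exact ⟨Z, hZ, fun t ht => ⟨ht.1.trans hs.1, ht.2.trans hs.2⟩⟩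
  | univ => exact ⟨∅, finite_empty, fun t _ => mem_univ t⟩
  | inter U₁ U₂ _ _ ih₁ ih₂ =>
    obtain ⟨Z₁, hZ₁, h₁⟩ := ih₁ hs.1
    obtain ⟨Z₂, hZ₂, h₂⟩ := ih₂ hs.2
    exact ⟨Z₁ ∪ Z₂, hZ₁.union hZ₂, fun t ht =>
      ⟨h₁ t (ht.mono subset_union_left), h₂ t (ht.mono subset_union_right)⟩⟩
  | sUnion S _ ih =>
    obtain ⟨U, hUS, hsU⟩ := hs
    obtain ⟨Z, hZ, h⟩ := ih U hUS hsU
    exact ⟨Z, hZ, fun t ht => ⟨U, hUS, h t ht⟩⟩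

lemma mem_closure_of_forall_agreeOn {S : Set (FinSep G)} {s : FinSep G}
    (h : ∀ Z : Set V, Z.Finite → ∃ t ∈ S, AgreeOn Z t s) : s ∈ closure S := by
  refine mem_closure_iff.mpr fun U hU hsU => ?_
  obtain ⟨Z, hZ, hZU⟩ := exists_agreeOn_subset_of_isOpen hU hsU
  obtain ⟨t, htS, hts⟩ := h Z hZ
  exact ⟨t, hZU t hts, htS⟩

end FinSep

open FinSep

section EndTangle

variable {V : Type u} {G : SimpleGraph V}

lemma HasTailIn.infinite {R : GraphRay G} {B : Set V} (h : HasTailIn R B) : B.Infinite := by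
  obtain ⟨N, hN⟩ := h
  exact infinite_of_injective_forall_mem (f := fun n => R.f (n + N))
    (fun a b hab => Nat.add_right_cancel (R.inj hab)) fun n => hN _ (Nat.le_add_left N n)

lemma notMem_endTangle_of_finite {ω : GraphEnd G} {s : FinSep G} (hs : s.1.B.Finite) :
    s ∉ endTangle ω := fun h =>
  (h _ ω.nonempty.some_mem).infinite hs

lemma emptyLeft_mem_endTangle (ω : GraphEnd G) : (emptyLeft : FinSep G) ∈ endTangle ω :=
  fun _ _ => ⟨0, fun _ _ => mem_univ _⟩

lemma join_mem_endTangle {ω : GraphEnd G} {s t : FinSep G} (hs : s ∈ endTangle ω)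
    (ht : t ∈ endTangle ω) : join s t ∈ endTangle ω := by
  intro R hR
  obtain ⟨N₁, h₁⟩ := hs R hR
  obtain ⟨N₂, h₂⟩ := ht R hR
  exact ⟨max N₁ N₂, fun n hn => ⟨h₁ n (le_of_max_le_left hn), h₂ n (le_of_max_le_right hn)⟩⟩

lemma extendLeft_mem_endTangle {ω : GraphEnd G} {s : FinSep G} {X : Set V} (hX : X.Finite)
    (hs : s ∈ endTangle ω) : extendLeft s X hX ∈ endTangle ω :=
  hs

def endKernel (ω : GraphEnd G) : Set V :=
  ⋂ s ∈ endTangle ω, s.1.B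

lemma endKernel_subset {ω : GraphEnd G} {s : FinSep G} (hs : s ∈ endTangle ω) :
    endKernel ω ⊆ s.1.B :=
  biInter_subset_of_mem hs

lemma exists_mem_endTangle_inter_subset_endKernel (ω : GraphEnd G) {Z : Set V}
    (hZ : Z.Finite) : ∃ t ∈ endTangle ω, t.1.B ∩ Z ⊆ endKernel ω := by
  induction Z, hZ using Finite.induction_on with
  | empty => exact ⟨emptyLeft, emptyLeft_mem_endTangle ω, by simp⟩
  | @insert v Z _ _ ih =>
    obtain ⟨t, ht, htZ⟩ := ih
    by_cases hv : v ∈ endKernel ω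
    · refine ⟨t, ht, ?_⟩
      rintro x ⟨hxt, rfl | hxZ⟩
      · exact hv
      · exact htZ ⟨hxt, hxZ⟩
    · obtain ⟨u, hu, hvu⟩ : ∃ u ∈ endTangle ω, v ∉ u.1.B := by
        simpa [endKernel] using hv
      refine ⟨join t u, join_mem_endTangle ht hu, ?_⟩
      rintro x ⟨⟨hxt, hxu⟩, rfl | hxZ⟩
      · exact (hvu hxu).elim
      · exact htZ ⟨hxt, hxZ⟩

lemma exists_mem_endTangle_agreeOn (ω : GraphEnd G) {s : FinSep G} (hA : s.1.A = univ)
    (hB : s.1.B = endKernel ω) {Z : Set V} (hZ : Z.Finite) :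
    ∃ t ∈ endTangle ω, AgreeOn Z t s := by
  obtain ⟨t, ht, htZ⟩ := exists_mem_endTangle_inter_subset_endKernel ω hZ
  refine ⟨extendLeft t Z hZ, extendLeft_mem_endTangle hZ ht, ?_, ?_⟩
  · simp only [extendLeft, hA, univ_inter, union_inter_cancel_right]
  · exact hB ▸ subset_antisymm (subset_inter htZ inter_subset_right)
      (inter_subset_inter_left Z (endKernel_subset ht))

end EndTangle

/-- if `K = ⋂ {B : (A,B) ∈ τ}` is finite for an end tangle `τ`,
then `τ` is not closed: `(V,K) ∉ τ` but `(V,K)` agrees on every finite `Z`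
with some member of `τ`. -/
theorem kernel_finite_not_closed {V : Type u} (G : SimpleGraph V) (ω : GraphEnd G)
    (K : Set V) (hK : K = ⋂ s ∈ endTangle ω, s.1.B) (hfin : K.Finite) :
    ¬ IsClosed (endTangle ω) ∧
    ∀ s : FinSep G, s.1.A = Set.univ → s.1.B = K →
      s ∉ endTangle ω ∧
      ∀ Z : Set V, Z.Finite → ∃ t ∈ endTangle ω,
        t.1.A ∩ Z = s.1.A ∩ Z ∧ t.1.B ∩ Z = s.1.B ∩ Z := by
  subst hK
  have hVK : ∀ s : FinSep G, s.1.A = univ → s.1.B = endKernel ω →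
      s ∉ endTangle ω ∧ ∀ Z : Set V, Z.Finite → ∃ t ∈ endTangle ω, AgreeOn Z t s :=
    fun s hA hB => ⟨notMem_endTangle_of_finite (hB ▸ hfin),
      fun Z hZ => exists_mem_endTangle_agreeOn ω hA hB hZ⟩
  refine ⟨fun hclosed => ?_, hVK⟩
  obtain ⟨hnot, hagree⟩ := hVK (univLeft _ hfin) rfl rfl
  exact hnot (hclosed.closure_subset (mem_closure_of_forall_agreeOn hagree))
end

section
/- If ω is an undominated end of G, then every finite set Y ⊆ V can be separated from ω by a finite set of vertices disjoint from Y. -/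
open Set

universe u

/-
Suppose no finite `F` disjoint from `Y` separates `Y` from `ω`, and fix a ray `R` of `ω`
avoiding `Y`. Then for every finite `S` and every `N` some ray of `ω` meets `Y` and avoids
`(S ∪ R[<N]) \ Y`; linking it to `R` and cutting at its last vertex in `Y` gives a `Y`–`R` path
that meets `S` only in `Y` and ends beyond `R[<N]`. Choosing such paths greedily, each avoiding
all earlier ones outside `Y`, yields infinitely many `Y`–`R` paths with distinct ends that pairwise
meet only in `Y`. Infinitely many of them start at the same `y ∈ Y`, so `y` dominates `ω`.
-/

open SimpleGraph

variable {V : Type u} {G : SimpleGraph V}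

lemma SimpleGraph.Walk.exists_isPath_meeting_set_only_at_start [DecidableEq V] {Y : Set V}
    {u v : V} (w : G.Walk u v) (h : ∃ x ∈ w.support, x ∈ Y) :
    ∃ y ∈ Y, ∃ p : G.Walk y v, p.IsPath ∧ (∀ x ∈ p.support, x ∈ w.support) ∧
      ∀ x ∈ p.support, x ∈ Y → x = y := by
  induction w with
  | nil =>
    obtain ⟨x, hx, hxY⟩ := h
    rw [support_nil, List.mem_singleton] at hx
    subst hx
    exact ⟨x, hxY, nil, IsPath.nil, fun _ hx => hx, fun _ hx _ => by simpa using hx⟩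
  | @cons u _ _ hadj p ih =>
    by_cases hp : ∃ x ∈ p.support, x ∈ Y
    · obtain ⟨y, hy, q, hq, hsub, honce⟩ := ih hp
      exact ⟨y, hy, q, hq, fun x hx => List.mem_cons_of_mem _ (hsub x hx), honce⟩
    · push Not at hp
      have hu : u ∈ Y := by
        obtain ⟨x, hx, hxY⟩ := h
        rcases List.mem_cons.1 hx with rfl | hx
        · exact hxY
        · exact absurd hxY (hp x hx)
      refine ⟨u, hu, (cons hadj p).toPath, (cons hadj p).toPath.2,
        fun x hx => support_toPath_subset_support _ hx, fun x hx hxY => ?_⟩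
      rcases List.mem_cons.1 (support_toPath_subset_support _ hx) with rfl | hx'
      · rfl
      · exact absurd hxY (hp x hx')

lemma Set.Finite.exists_injective_forall_eq {α : Type*} {f : ℕ → α} {s : Set α}
    (hs : s.Finite) (hf : ∀ n, f n ∈ s) :
    ∃ a, ∃ e : ℕ → ℕ, Function.Injective e ∧ ∀ n, f (e n) = a := by
  have := hs.to_subtype
  obtain ⟨⟨a, ha⟩, hinf⟩ := Finite.exists_infinite_fiber fun n => (⟨f n, hf n⟩ : s)
  let e := _root_.Infinite.natEmbedding ((fun n => (⟨f n, hf n⟩ : s)) ⁻¹' {⟨a, ha⟩})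
  exact ⟨a, fun n => (e n).1, Subtype.val_injective.comp e.injective,
    fun n => congrArg Subtype.val (e n).2⟩

namespace GraphRay

def drop (R : GraphRay G) (k : ℕ) : GraphRay G where
  f n := R.f (k + n)
  inj _ _ h := Nat.add_left_cancel (R.inj h)
  adj n := R.adj (k + n)

lemma exists_forall_ge_notMem (R : GraphRay G) {F : Set V} (hF : F.Finite) :
    ∃ N, ∀ n ≥ N, R.f n ∉ F := by
  obtain ⟨B, hB⟩ := (hF.preimage R.inj.injOn).bddAbove
  exact ⟨B + 1, fun n hn hnF => by have := hB hnF; omega⟩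

lemma rayEquiv_drop (R : GraphRay G) (k : ℕ) : RayEquiv G R (R.drop k) := by
  intro F hF
  obtain ⟨N, hN⟩ := R.exists_forall_ge_notMem hF
  refine ⟨k + N, N, Walk.nil, fun x hx => ?_⟩
  rw [List.eq_of_mem_singleton hx]
  exact hN (k + N) (Nat.le_add_left N k)

lemma exists_walk (R : GraphRay G) (a b : ℕ) :
    ∃ w : G.Walk (R.f a) (R.f b), ∀ x ∈ w.support, x ∈ Set.range R.f := by
  have from_zero : ∀ b, ∃ w : G.Walk (R.f 0) (R.f b), ∀ x ∈ w.support, x ∈ Set.range R.f := by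
    intro b
    induction b with
    | zero => exact ⟨Walk.nil, fun x hx => ⟨0, by simp_all⟩⟩
    | succ b ih =>
      obtain ⟨w, hw⟩ := ih
      refine ⟨w.concat (R.adj b), fun x hx => ?_⟩
      simp only [Walk.support_concat, List.mem_append, List.mem_singleton] at hx
      rcases hx with hx | rfl
      · exact hw x hx
      · exact ⟨b + 1, rfl⟩
  obtain ⟨wa, ha⟩ := from_zero a
  obtain ⟨wb, hb⟩ := from_zero b
  refine ⟨wa.reverse.append wb, fun x hx => ?_⟩
  rcases (Walk.mem_support_append_iff _ _).1 hx with hx | hx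
  · rw [Walk.support_reverse, List.mem_reverse] at hx
    exact ha x hx
  · exact hb x hx

lemma exists_walk_avoiding_of_not_separates {ω : GraphEnd G} {R : GraphRay G} {Y F : Set V}
    (hR : R ∈ ω.rays) (hF : F.Finite) (hsep : ¬ SeparatesFromEnd G Y F ω) :
    ∃ y ∈ Y, ∃ n, ∃ w : G.Walk y (R.f n), ∀ x ∈ w.support, x ∉ F := by
  simp only [SeparatesFromEnd, not_forall, not_exists] at hsep
  obtain ⟨R', hR', ⟨a, ha⟩, hR'F⟩ := hsep
  obtain ⟨m, n, w, hw⟩ := (ω.mem_iff R' hR' R).1 hR F hF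
  obtain ⟨w', hw'⟩ := R'.exists_walk a m
  refine ⟨R'.f a, ha, n, w'.append w, fun x hx => ?_⟩
  rcases (Walk.mem_support_append_iff _ _).1 hx with hx | hx
  · obtain ⟨k, rfl⟩ := hw' x hx
    exact hR'F k
  · exact hw x hx

structure PathFrom (R : GraphRay G) (Y : Set V) where
  start : V
  start_mem : start ∈ Y
  idx : ℕ
  walk : G.Walk start (R.f idx)
  isPath : walk.IsPath
  eq_start : ∀ x ∈ walk.support, x ∈ Y → x = start

def PathFrom.Independent {R : GraphRay G} {Y : Set V} (P Q : R.PathFrom Y) : Prop :=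
  P.idx ≠ Q.idx ∧ ∀ x ∈ P.walk.support, x ∈ Q.walk.support → x ∈ Y

instance PathFrom.symm_independent {R : GraphRay G} {Y : Set V} :
    Std.Symm (PathFrom.Independent (R := R) (Y := Y)) :=
  ⟨fun _ _ h => ⟨h.1.symm, fun x hQ hP => h.2 x hP hQ⟩⟩

section NotSeparated

variable {ω : GraphEnd G} {R : GraphRay G} {Y : Set V} (hR : R ∈ ω.rays)
  (hRY : ∀ n, R.f n ∉ Y)
  (hsep : ∀ F : Set V, F.Finite → Disjoint F Y → ¬ SeparatesFromEnd G Y F ω)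
include hR hRY hsep

lemma exists_pathFrom_avoiding {S : Set V} (hS : S.Finite) (N : ℕ) :
    ∃ P : R.PathFrom Y, N ≤ P.idx ∧ ∀ x ∈ P.walk.support, x ∈ S → x ∈ Y := by
  classical
  have hF : ((S ∪ R.f '' Set.Iio N) \ Y).Finite := (hS.union ((Set.finite_Iio N).image _)).sdiff
  obtain ⟨y, hy, n, w, hw⟩ :=
    exists_walk_avoiding_of_not_separates hR hF (hsep _ hF Set.disjoint_sdiff_left)
  obtain ⟨y', hy', p, hp, hsub, honce⟩ :=
    w.exists_isPath_meeting_set_only_at_start ⟨y, w.start_mem_support, hy⟩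
  refine ⟨⟨y', hy', n, p, hp, honce⟩, ?_, fun x hx hxS => ?_⟩
  · by_contra! hn
    exact hw _ (hsub _ p.end_mem_support) ⟨Or.inr ⟨n, hn, rfl⟩, hRY n⟩
  · by_contra hxY
    exact hw x (hsub x hx) ⟨Or.inl hxS, hxY⟩

lemma exists_seq_pairwise_independent :
    ∃ P : ℕ → R.PathFrom Y, Pairwise fun i j => (P i).Independent (P j) := by
  obtain ⟨P, -, hP⟩ := exists_seq_of_forall_finset_exists' (fun _ => True)
    PathFrom.Independent fun s _ => by
      obtain ⟨Q, hN, hS⟩ := exists_pathFrom_avoiding hR hRY hsep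
        (s.finite_toSet.biUnion fun P _ => P.walk.support.finite_toSet) (s.sup PathFrom.idx + 1)
      refine ⟨Q, trivial, fun P hP => ⟨?_, fun x hxP hxQ => hS x hxQ (Set.mem_biUnion hP hxP)⟩⟩
      have := Finset.le_sup (f := PathFrom.idx) hP
      omega
  exact ⟨P, hP⟩

end NotSeparated

lemma dominates_of_pairwise_independent {ω : GraphEnd G} {R : GraphRay G} {Y : Set V}
    (hR : R ∈ ω.rays) {P : ℕ → R.PathFrom Y} (hP : Pairwise fun i j => (P i).Independent (P j))
    {y : V} (hy : ∀ i, (P i).start = y) : Dominates G y ω := by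
  refine ⟨R, hR, fun i => ⟨(P i).idx, (P i).walk.copy (hy i) rfl⟩,
    fun i => (Walk.isPath_copy _ (hy i) rfl).2 (P i).isPath, fun i j hij => ?_,
    fun i j hij x hxi hxj => ?_⟩
  · by_contra hne
    exact (hP hne).1 hij
  · rw [Walk.support_copy] at hxi hxj
    rw [← hy i]
    exact (P i).eq_start x hxi ((hP hij).2 x hxi hxj)

end GraphRay

/-- a finite set can be separated from an undominated end by a
finite set of vertices disjoint from it. -/
theorem separate_from_undominated {V : Type u} (G : SimpleGraph V) (ω : GraphEnd G)
    (hundom : ∀ v : V, ¬ Dominates G v ω) (Y : Set V) (hY : Y.Finite) :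
    ∃ F : Set V, F.Finite ∧ Disjoint F Y ∧ SeparatesFromEnd G Y F ω := by
  by_contra! hsep
  obtain ⟨R, hR⟩ := ω.nonempty
  obtain ⟨k, hk⟩ := R.exists_forall_ge_notMem hY
  have hRk : R.drop k ∈ ω.rays := (ω.mem_iff R hR _).2 (R.rayEquiv_drop k)
  have hRkY : ∀ n, (R.drop k).f n ∉ Y := fun n => hk (k + n) (Nat.le_add_right k n)
  obtain ⟨P, hP⟩ := GraphRay.exists_seq_pairwise_independent hRk hRkY hsep
  obtain ⟨y, e, he, hy⟩ := hY.exists_injective_forall_eq fun n => (P n).start_mem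
  exact hundom y (GraphRay.dominates_of_pairwise_independent hRk (hP.comp_of_injective he) hy)
end
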